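/- arXiv:1611.01829 — 6 statements merged into one kernel-verified Lean document; each statement's English description precedes it below -/
import Mathlib

section
/- Let K be a nonempty convex subset of a real vector space, and let f : K × K → ℝ satisfy: f(x,x) = 0 for all x ∈ K; f(x,·) is quasi-convex for every x ∈ K; and f is pseudo-monotone (f(x,y) ≥ 0 implies f(y,x) ≤ 0). Then f is properly quasi-monotone: for every finite subset A of K and every y ∈ conv(A), min_{x∈A} f(x,y) ≤ 0. -/
theorem properly_quasiMonotone_of_quasiConvex_second_pseudoMonotone
    {V : Type*} [AddCommGroup V] [Module ℝ V]
    (K : Set V) (hK : Convex ℝ K) (hKne : K.Nonempty)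
    (f : V → V → ℝ)
    (hdiag : ∀ x ∈ K, f x x = 0)
    (hqc : ∀ x ∈ K, ∀ y₁ ∈ K, ∀ y₂ ∈ K, ∀ lam : ℝ, 0 < lam → lam < 1 →
      f x (lam • y₁ + (1 - lam) • y₂) ≤ max (f x y₁) (f x y₂))
    (hpm : ∀ x ∈ K, ∀ y ∈ K, 0 ≤ f x y → f y x ≤ 0) :
    ∀ A : Finset V, A.Nonempty → ↑A ⊆ K →
      ∀ y ∈ convexHull ℝ (A : Set V), ∃ x ∈ A, f x y ≤ 0 := by
  intro A hA hAK y hy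
  by_contra h
  push_neg at h
  have hhull : convexHull ℝ (A : Set V) ⊆ K := convexHull_min hAK hK
  have hyK : y ∈ K := hhull hy
  -- each f y x is strictly negative
  have hneg : ∀ x ∈ A, f y x < 0 := by
    intro x hx
    have hxK : x ∈ K := hAK hx
    have h1 : f y x ≤ 0 := hpm x hxK y hyK (le_of_lt (h x hx))
    rcases lt_or_eq_of_le h1 with h2 | h2
    · exact h2
    · exfalso
      have : f x y ≤ 0 := hpm y hyK x hxK (ge_of_eq h2)
      exact absurd this (not_le.mpr (h x hx))
  -- the sublevel set of f y at level c is convex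
  set c : ℝ := A.sup' hA (f y) with hc
  have hclt : c < 0 := by
    obtain ⟨x, hx, hxc⟩ := Finset.exists_mem_eq_sup' hA (f y)
    rw [hc, hxc]; exact hneg x hx
  have hconv : Convex ℝ {z ∈ K | f y z ≤ c} := by
    intro a ha b hb s t hs ht hst
    refine ⟨hK ha.1 hb.1 hs ht hst, ?_⟩
    rcases eq_or_lt_of_le hs with hs0 | hs0
    · have : t = 1 := by linarith
      simp [← hs0, this, hb.2]
    rcases eq_or_lt_of_le ht with ht0 | ht0
    · have : s = 1 := by linarith
      simp [← ht0, this, ha.2]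
    have ht1 : (1 : ℝ) - s = t := by linarith
    have := hqc y hyK a ha.1 b hb.1 s hs0 (by linarith)
    rw [ht1] at this
    exact this.trans (max_le ha.2 hb.2)
  have hsub : convexHull ℝ (A : Set V) ⊆ {z ∈ K | f y z ≤ c} := by
    refine convexHull_min ?_ hconv
    intro x hx
    exact ⟨hAK hx, Finset.le_sup' (f y) hx⟩
  have := (hsub hy).2
  rw [hdiag y hyK] at this
  linarith
end

section
/- Let K be a nonempty closed convex subset of a real Hilbert space H, and let f : K × K → ℝ satisfy f(x,x) = 0 for all x, be pseudo-monotone, and with f(x,·) convex and lower semicontinuous for every x. Then x* ∈ K solves the equilibrium problem (f(x*,y) ≥ 0 for all y ∈ K) if and only if x* solves the convex feasibility problem (f(x,x*) ≤ 0 for all x ∈ K), provided additionally that f(·,y) is upper semicontinuous for every y ∈ K. -/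
theorem equilibrium_iff_convexFeasibility
    {H : Type*} [NormedAddCommGroup H] [InnerProductSpace ℝ H] [CompleteSpace H]
    (K : Set H) (hKne : K.Nonempty) (hKc : IsClosed K) (hKconv : Convex ℝ K)
    (f : H → H → ℝ)
    (hdiag : ∀ x ∈ K, f x x = 0)
    (hpm : ∀ x ∈ K, ∀ y ∈ K, 0 ≤ f x y → f y x ≤ 0)
    (hconv : ∀ x ∈ K, ConvexOn ℝ K (f x))
    (hlsc : ∀ x ∈ K, LowerSemicontinuousOn (f x) K)
    (husc : ∀ y ∈ K, UpperSemicontinuousOn (fun x => f x y) K)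
    (x' : H) (hx' : x' ∈ K) :
    (∀ y ∈ K, 0 ≤ f x' y) ↔ (∀ x ∈ K, f x x' ≤ 0) := by
  constructor
  · intro h x hx
    exact hpm x' hx' x hx (h x hx)
  · intro h y hy
    by_contra hneg
    push_neg at hneg
    -- path z t = t•y + (1-t)•x'
    set z : ℝ → H := fun t => t • y + (1 - t) • x' with hz
    have hzK : ∀ t ∈ Set.Ioc (0:ℝ) 1, z t ∈ K := by
      intro t ht
      exact hKconv hy hx' (le_of_lt ht.1) (by linarith [ht.2]) (by ring)
    have hkey : ∀ t ∈ Set.Ioc (0:ℝ) 1, 0 ≤ f (z t) y := by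
      intro t ht
      have hztK := hzK t ht
      have hc := (hconv (z t) hztK).2 hy hx' (le_of_lt ht.1) (sub_nonneg.2 ht.2)
        (by ring : t + (1 - t) = 1)
      have hzz : f (z t) (t • y + (1 - t) • x') = 0 := hdiag (z t) hztK
      have hfx' : f (z t) x' ≤ 0 := h (z t) hztK
      rw [hzz, smul_eq_mul, smul_eq_mul] at hc
      nlinarith [ht.1, ht.2]
    -- z t → x' as t → 0⁺ within K
    have htend : Filter.Tendsto z (nhdsWithin 0 (Set.Ioc (0:ℝ) 1)) (nhdsWithin x' K) := by
      rw [tendsto_nhdsWithin_iff]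
      constructor
      · have : Filter.Tendsto z (nhds 0) (nhds (z 0)) := by
          apply Continuous.tendsto
          continuity
        have h0 : z 0 = x' := by simp [hz]
        rw [h0] at this
        exact this.mono_left nhdsWithin_le_nhds
      · exact Filter.eventually_of_mem self_mem_nhdsWithin hzK
    -- upper semicontinuity at x'
    have husc' := husc y hy x' hx'
    have hev := husc' (f x' y / 2) (by linarith)
    have hev2 := htend.eventually hev
    have hne : (nhdsWithin (0:ℝ) (Set.Ioc 0 1)).NeBot := by
      apply mem_closure_iff_nhdsWithin_neBot.mp
      have : (0:ℝ) ∈ closure (Set.Ioc (0:ℝ) 1) := by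
        rw [closure_Ioc (by norm_num : (0:ℝ) ≠ 1)]
        simp
      exact this
    have hev3 : ∀ᶠ t in nhdsWithin (0:ℝ) (Set.Ioc 0 1), False := by
      filter_upwards [hev2, self_mem_nhdsWithin] with t ht htmem
      have := hkey t htmem
      linarith
    exact hev3.exists.elim (fun _ hf => hf)
end

section
/- Let K be a nonempty closed convex subset of a real Hilbert space, f : K × K → ℝ θ-undermonotone (f(x,y) + f(y,x) ≤ θ‖x−y‖² for all x,y ∈ K) for some θ ≥ 0, and λ > θ. Define f̃(x,y) = f(x,y) + λ⟨x − x̄, y − x⟩ for a fixed x̄. Then the equilibrium problem for f̃ on K has at most one solution: if x′ and x″ both satisfy f̃(x′,y) ≥ 0 and f̃(x″,y) ≥ 0 for all y ∈ K, then x′ = x″. -/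
open scoped RealInnerProductSpace

theorem regularized_equilibrium_unique
    {H : Type*} [NormedAddCommGroup H] [InnerProductSpace ℝ H] [CompleteSpace H]
    (K : Set H) (hKne : K.Nonempty) (hKc : IsClosed K) (hKconv : Convex ℝ K)
    (f : H → H → ℝ) (θ lam : ℝ) (hθ : 0 ≤ θ) (hlam : θ < lam)
    (hunder : ∀ x ∈ K, ∀ y ∈ K, f x y + f y x ≤ θ * ‖x - y‖ ^ 2)
    (xbar : H)
    (x' x'' : H) (hx' : x' ∈ K) (hx'' : x'' ∈ K)
    (hsol' : ∀ y ∈ K, 0 ≤ f x' y + lam * ⟪x' - xbar, y - x'⟫)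
    (hsol'' : ∀ y ∈ K, 0 ≤ f x'' y + lam * ⟪x'' - xbar, y - x''⟫) :
    x' = x'' := by
  have h1 := hsol' x'' hx''
  have h2 := hsol'' x' hx'
  have hu := hunder x' hx' x'' hx''
  have hinner : ⟪x' - xbar, x'' - x'⟫ + ⟪x'' - xbar, x' - x''⟫ = -‖x' - x''‖ ^ 2 := by
    simp only [inner_sub_left, inner_sub_right, real_inner_self_eq_norm_sq,
      real_inner_comm x'' x']
    rw [norm_sub_sq_real]; linarith [real_inner_comm x' x'']
  have key : lam * ‖x' - x''‖ ^ 2 ≤ θ * ‖x' - x''‖ ^ 2 := by nlinarith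
  have hn : ‖x' - x''‖ ^ 2 ≤ 0 := by nlinarith
  have h0 : ‖x' - x''‖ = 0 := by nlinarith [sq_nonneg ‖x' - x''‖, norm_nonneg (x' - x'')]
  have := norm_eq_zero.mp h0
  exact sub_eq_zero.mp this
end

section
/- Let f : K × K → ℝ be a cyclic monotone bifunction (for every n and every x₁,…,xₙ ∈ K, f(x₁,x₂) + f(x₂,x₃) + ⋯ + f(xₙ,x₁) ≤ 0) with f(x,x) = 0 for all x. Then there exists a function g : K → ℝ such that f(x,y) ≤ g(y) − g(x) for all x,y ∈ K. -/
/-!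
Fix a base point `x₀ ∈ K` and let `g y` be the supremum of the sums
`f(x₀,x₁) + ⋯ + f(xₙ₋₁,y)` over all chains in `K` from `x₀` to `y`. Closing such a chain with
`f(y,x₀)` gives a cycle, so cyclic monotonicity bounds these sums by `-f(y,x₀)` and `g` is finite.
Prolonging a chain ending at `x` by the step to `y` shows `g x + f(x,y) ≤ g y`.
-/

section chainSums

variable {α : Type*}

def chainSums (K : Set α) (f : α → α → ℝ) (x₀ y : α) : Set ℝ :=
  {s | ∃ (n : ℕ) (x : ℕ → α), (∀ i, x i ∈ K) ∧ x 0 = x₀ ∧ x n = y ∧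
    s = ∑ i ∈ Finset.range n, f (x i) (x (i + 1))}

variable {K : Set α} {f : α → α → ℝ} {x₀ : α}

theorem zero_mem_chainSums (h₀ : x₀ ∈ K) : 0 ∈ chainSums K f x₀ x₀ :=
  ⟨0, fun _ => x₀, fun _ => h₀, rfl, rfl, by simp⟩

theorem add_mem_chainSums {x y : α} {s : ℝ} (hs : s ∈ chainSums K f x₀ x) (hy : y ∈ K) :
    s + f x y ∈ chainSums K f x₀ y := by
  obtain ⟨n, c, hcK, hc0, hcn, rfl⟩ := hs
  refine ⟨n + 1, fun i => if i ≤ n then c i else y, fun i => ?_, by simp [hc0], by simp, ?_⟩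
  · dsimp only
    split_ifs
    exacts [hcK i, hy]
  · rw [Finset.sum_range_succ]
    congr 1
    · refine Finset.sum_congr rfl fun i hi => ?_
      have hi : i < n := Finset.mem_range.1 hi
      simp [hi.le, Nat.succ_le_of_lt hi]
    · simp [hcn]

theorem bddAbove_chainSums
    (hcyc : ∀ (n : ℕ) (x : ℕ → α), (∀ i, x i ∈ K) →
      (∑ i ∈ Finset.range n, f (x i) (x (i + 1))) + f (x n) (x 0) ≤ 0)
    (y : α) : BddAbove (chainSums K f x₀ y) := by
  refine ⟨-f y x₀, ?_⟩
  rintro s ⟨n, x, hxK, rfl, rfl, rfl⟩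
  linarith [hcyc n x hxK]

end chainSums

theorem csSup_add_le_csSup {S T : Set ℝ} {c : ℝ} (hS : S.Nonempty) (hT : BddAbove T)
    (h : ∀ s ∈ S, s + c ∈ T) : sSup S + c ≤ sSup T :=
  le_sub_iff_add_le.1 <| csSup_le hS fun s hs => le_sub_iff_add_le.2 <| le_csSup hT (h s hs)

theorem cyclic_monotone_has_potential_general
    {α : Type*} (K : Set α) (hKne : K.Nonempty) (f : α → α → ℝ)
    (hcyc : ∀ (n : ℕ) (x : ℕ → α), (∀ i, x i ∈ K) →
      (∑ i ∈ Finset.range n, f (x i) (x (i + 1))) + f (x n) (x 0) ≤ 0) :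
    ∃ g : α → ℝ, ∀ x ∈ K, ∀ y ∈ K, f x y ≤ g y - g x := by
  obtain ⟨x₀, hx₀⟩ := hKne
  have hne : ∀ y ∈ K, (chainSums K f x₀ y).Nonempty := fun y hy =>
    ⟨_, add_mem_chainSums (zero_mem_chainSums hx₀) hy⟩
  refine ⟨fun y => sSup (chainSums K f x₀ y), fun x hx y hy => ?_⟩
  have := csSup_add_le_csSup (hne x hx) (bddAbove_chainSums hcyc y)
    fun _ hs => add_mem_chainSums hs hy
  linarith

theorem cyclic_monotone_has_potential
    {α : Type*} (K : Set α) (hKne : K.Nonempty) (f : α → α → ℝ)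
    (hdiag : ∀ x ∈ K, f x x = 0)
    (hcyc : ∀ (n : ℕ) (x : ℕ → α), (∀ i, x i ∈ K) →
      (∑ i ∈ Finset.range n, f (x i) (x (i + 1))) + f (x n) (x 0) ≤ 0) :
    ∃ g : α → ℝ, ∀ x ∈ K, ∀ y ∈ K, f x y ≤ g y - g x :=
  cyclic_monotone_has_potential_general K hKne f hcyc
end

section
/- Let f : K × K → ℝ be n-pseudomonotone of type (I) for all n (i.e., whenever f(x₁,x₂) + f(x₂,x₃) + ⋯ + f(x_{n−2},x_{n−1}) ≤ f(x₁,xₙ), it holds that f(xₙ,x_{n−1}) ≤ 0) and satisfy f(x,x) = 0 for all x ∈ K. Then f is n-pseudomonotone: if f(x₁,x₂) ≥ 0, f(x₂,x₃) ≥ 0, …, f(x_{n−1},xₙ) ≥ 0, then f(xₙ,x₁) ≤ 0. -/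
/-! Along a chain `x 0, …, x (n + 1)` with nonnegative links, induct on its length: the 2-point
instance of type (I) is pseudomonotonicity, which settles a single link, and the 3-point instance,
applied to `f (x (n + 1)) (x 0) ≤ 0 ≤ f (x (n + 1)) (x (n + 2))`, transports the conclusion
`f (x (n + 1)) (x 0) ≤ 0` one link further. -/

section TypeI

variable {α : Type*} {K : Set α} {f : α → α → ℝ}

def IsPseudomonotoneTypeI (K : Set α) (f : α → α → ℝ) (n : ℕ) : Prop :=
  ∀ x : ℕ → α, (∀ i, x i ∈ K) →
    (∑ i ∈ Finset.range (n - 2), f (x i) (x (i + 1))) ≤ f (x 0) (x (n - 1)) →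
    f (x (n - 1)) (x (n - 2)) ≤ 0

theorem IsPseudomonotoneTypeI.two (h : IsPseudomonotoneTypeI K f 2) :
    ∀ a ∈ K, ∀ b ∈ K, 0 ≤ f a b → f b a ≤ 0 := by
  intro a ha b hb hab
  have hK : ∀ i, (fun i => if i = 0 then a else b) i ∈ K := fun i => by
    dsimp only; split_ifs <;> assumption
  simpa using h _ hK (by simpa using hab)

theorem IsPseudomonotoneTypeI.three (h : IsPseudomonotoneTypeI K f 3) :
    ∀ a ∈ K, ∀ b ∈ K, ∀ c ∈ K, f a b ≤ f a c → f c b ≤ 0 := by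
  intro a ha b hb c hc hle
  have hK : ∀ i, (fun i => if i = 0 then a else if i = 1 then b else c) i ∈ K := fun i => by
    dsimp only; split_ifs <;> assumption
  simpa using h _ hK (by simpa using hle)

theorem le_zero_of_chain
    (hpm : ∀ a ∈ K, ∀ b ∈ K, 0 ≤ f a b → f b a ≤ 0)
    (hthree : ∀ a ∈ K, ∀ b ∈ K, ∀ c ∈ K, f a b ≤ f a c → f c b ≤ 0)
    (x : ℕ → α) (hK : ∀ i, x i ∈ K) :
    ∀ n, (∀ i ≤ n, 0 ≤ f (x i) (x (i + 1))) → f (x (n + 1)) (x 0) ≤ 0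
  | 0, hchain => hpm _ (hK 0) _ (hK 1) (hchain 0 le_rfl)
  | n + 1, hchain =>
    have hback : f (x (n + 1)) (x 0) ≤ 0 :=
      le_zero_of_chain hpm hthree x hK n fun i hi => hchain i (by omega)
    hthree _ (hK _) _ (hK 0) _ (hK _) (hback.trans (hchain (n + 1) le_rfl))

end TypeI

theorem n_pseudomonotone_of_type_I_general
    {α : Type*} (K : Set α) (f : α → α → ℝ)
    (htypeI : ∀ (n : ℕ) (x : ℕ → α), 2 ≤ n → (∀ i, x i ∈ K) →
      (∑ i ∈ Finset.range (n - 2), f (x i) (x (i + 1))) ≤ f (x 0) (x (n - 1)) →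
      f (x (n - 1)) (x (n - 2)) ≤ 0) :
    ∀ (n : ℕ) (x : ℕ → α), 2 ≤ n → (∀ i, x i ∈ K) →
      (∀ i, i < n - 1 → 0 ≤ f (x i) (x (i + 1))) →
      f (x (n - 1)) (x 0) ≤ 0 := by
  intro n x hn hK hchain
  obtain ⟨m, rfl⟩ : ∃ m, n = m + 2 := ⟨n - 2, by omega⟩
  have htwo : IsPseudomonotoneTypeI K f 2 := fun x => htypeI 2 x le_rfl
  have hthree : IsPseudomonotoneTypeI K f 3 := fun x => htypeI 3 x (by norm_num)
  exact le_zero_of_chain htwo.two hthree.three x hK m fun i hi => hchain i (by omega)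

theorem n_pseudomonotone_of_type_I
    {α : Type*} (K : Set α) (hKne : K.Nonempty) (f : α → α → ℝ)
    (hdiag : ∀ x ∈ K, f x x = 0)
    (htypeI : ∀ (n : ℕ) (x : ℕ → α), 2 ≤ n → (∀ i, x i ∈ K) →
      (∑ i ∈ Finset.range (n - 2), f (x i) (x (i + 1))) ≤ f (x 0) (x (n - 1)) →
      f (x (n - 1)) (x (n - 2)) ≤ 0) :
    ∀ (n : ℕ) (x : ℕ → α), 2 ≤ n → (∀ i, x i ∈ K) →
      (∀ i, i < n - 1 → 0 ≤ f (x i) (x (i + 1))) →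
      f (x (n - 1)) (x 0) ≤ 0 :=
  n_pseudomonotone_of_type_I_general K f htypeI
end

section
/- Let f : K × K → ℝ be cyclic pseudomonotone of type (I) and suppose there exist u,v ∈ K with f(u,v) > 0, and suppose the infimum φ(x₁) = inf over n ≥ 3 and x₂,…,x_{n−2} ∈ K of f(x₁,x₂) + ⋯ + f(x_{n−2},v) is finite (it is bounded below by f(x₁,u)). Then with g = −φ one has f(x,y) ≥ g(y) − g(x) for all x,y ∈ K. Moreover, if f(·,y) is concave for each y ∈ K (with K convex in a real vector space), then g is convex. -/
/-- The set of values of chain sums `f(x,x₂)+⋯+f(x_{n-2},v)` starting at `x`,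
over chains in `K` of arbitrary length (corresponding to all `n ≥ 3`). -/
def chainValues {V : Type*} (K : Set V) (f : V → V → ℝ) (v : V) (x : V) : Set ℝ :=
  { s | ∃ (m : ℕ) (c : ℕ → V), c 0 = x ∧ (∀ i, c i ∈ K) ∧
        s = (∑ i ∈ Finset.range m, f (c i) (c (i + 1))) + f (c m) v }

/-!
Write `φ x` for the infimum of the chain sums starting at `x`. A chain from `x` either goes
straight to `v` or steps to some `w ∈ K` and continues with a chain from `w`. Prepending the
step `x → y` to chains from `y` gives `φ x ≤ f x y + φ y`, i.e. `f x y ≥ g y - g x`. The same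
decomposition exhibits `φ` as the infimum of the functions `f · v` and `f · w + t`, which are
concave when each `f · y` is, so `φ` is concave and `g = -φ` is convex.
-/

open Set

theorem ConcaveOn.ciInf {E ι : Type*} [AddCommGroup E] [Module ℝ E] [Nonempty ι]
    {s : Set E} {F : ι → E → ℝ} (hs : Convex ℝ s) (hF : ∀ i, ConcaveOn ℝ s (F i))
    (hbdd : ∀ x ∈ s, BddBelow (range fun i => F i x)) :
    ConcaveOn ℝ s fun x => ⨅ i, F i x := by
  refine ⟨hs, fun x hx y hy a b ha hb hab => le_ciInf fun i => ?_⟩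
  calc _ ≤ a • F i x + b • F i y := by
        simp only [smul_eq_mul]
        gcongr
        exacts [ciInf_le (hbdd x hx) i, ciInf_le (hbdd y hy) i]
    _ ≤ F i (a • x + b • y) := (hF i).2 hx hy ha hb hab

section ChainValues

variable {V : Type*} {K : Set V} {f : V → V → ℝ} {v x : V}

theorem mem_chainValues_iff (hx : x ∈ K) {s : ℝ} :
    s ∈ chainValues K f v x ↔
      s = f x v ∨ ∃ w ∈ K, ∃ t ∈ chainValues K f v w, s = f x w + t := by
  constructor
  · rintro ⟨m, c, rfl, hcK, rfl⟩
    cases m with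
    | zero => simp
    | succ k =>
      refine Or.inr ⟨c 1, hcK 1, _,
        ⟨k, fun i => c (i + 1), rfl, fun i => hcK (i + 1), rfl⟩, ?_⟩
      rw [Finset.sum_range_succ']
      ring
  · rintro (rfl | ⟨w, -, t, ⟨m, c, rfl, hcK, rfl⟩, rfl⟩)
    · exact ⟨0, fun _ => x, rfl, fun _ => hx, by simp⟩
    · refine ⟨m + 1, fun i => Nat.casesOn i x c, rfl, fun i => ?_, ?_⟩
      · cases i
        exacts [hx, hcK _]
      · rw [Finset.sum_range_succ']
        simp only [Nat.rec_zero]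
        ring

theorem chainValues_nonempty (hx : x ∈ K) : (chainValues K f v x).Nonempty :=
  ⟨f x v, (mem_chainValues_iff hx).2 (Or.inl rfl)⟩

theorem sInf_chainValues_le_add {y : V} (hx : x ∈ K) (hy : y ∈ K)
    (hbdd : BddBelow (chainValues K f v x)) :
    sInf (chainValues K f v x) ≤ f x y + sInf (chainValues K f v y) := by
  rw [← sub_le_iff_le_add']
  refine le_csInf (chainValues_nonempty hy) fun t ht => sub_le_iff_le_add'.2 ?_
  exact csInf_le hbdd ((mem_chainValues_iff hx).2 (Or.inr ⟨y, hy, t, ht, rfl⟩))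

variable (K f v) in
/-- `some ⟨(w, t), _⟩` encodes a first step to `w` followed by a chain from `w` of value `t`;
`none` encodes the chain that goes straight to `v`. -/
def ChainTail : Type _ :=
  Option {p : V × ℝ // p.1 ∈ K ∧ p.2 ∈ chainValues K f v p.1}

instance : Nonempty (ChainTail K f v) := ⟨none⟩

variable (f v) in
def ChainTail.value (x : V) (τ : ChainTail K f v) : ℝ :=
  Option.elim τ (f x v) fun p => f x p.1.1 + p.1.2

theorem chainValues_eq_range_value (hx : x ∈ K) :
    chainValues K f v x = range fun τ : ChainTail K f v => τ.value f v x := by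
  ext s
  rw [mem_chainValues_iff hx]
  constructor
  · rintro (rfl | ⟨w, hw, t, ht, rfl⟩)
    exacts [⟨none, rfl⟩, ⟨some ⟨(w, t), hw, ht⟩, rfl⟩]
  · rintro ⟨_ | ⟨⟨w, t⟩, hw, ht⟩, rfl⟩
    exacts [Or.inl rfl, Or.inr ⟨w, hw, t, ht, rfl⟩]

theorem concaveOn_sInf_chainValues [AddCommGroup V] [Module ℝ V] (hK : Convex ℝ K)
    (hv : v ∈ K) (hconc : ∀ y ∈ K, ConcaveOn ℝ K fun x => f x y)
    (hbdd : ∀ x ∈ K, BddBelow (chainValues K f v x)) :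
    ConcaveOn ℝ K fun x => sInf (chainValues K f v x) := by
  have hφ : EqOn (fun x => ⨅ τ : ChainTail K f v, τ.value f v x)
      (fun x => sInf (chainValues K f v x)) K :=
    fun x hx => congrArg sInf (chainValues_eq_range_value hx).symm
  refine (ConcaveOn.ciInf hK (fun τ => ?_) fun x hx => ?_).congr hφ
  · rcases τ with _ | ⟨⟨w, t⟩, hw, -⟩
    exacts [hconc v hv, (hconc w hw).add_const t]
  · exact chainValues_eq_range_value hx ▸ hbdd x hx

end ChainValues

theorem cyclic_pseudomonotone_type_I_potential_general
    {V : Type*} [AddCommGroup V] [Module ℝ V]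
    (K : Set V) (hKconv : Convex ℝ K) (f : V → V → ℝ)
    (u v : V) (hv : v ∈ K)
    (hbdd : ∀ x ∈ K, ∀ s ∈ chainValues K f v x, f x u ≤ s) :
    (∀ x ∈ K, ∀ y ∈ K,
        (-(sInf (chainValues K f v y))) - (-(sInf (chainValues K f v x))) ≤ f x y) ∧
    ((∀ y ∈ K, ConcaveOn ℝ K (fun x => f x y)) →
        ConvexOn ℝ K (fun x => -(sInf (chainValues K f v x)))) := by
  have hbddBelow : ∀ x ∈ K, BddBelow (chainValues K f v x) := fun x hx => ⟨f x u, hbdd x hx⟩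
  refine ⟨fun x hx y hy => ?_, fun hconc => ?_⟩
  · linarith [sInf_chainValues_le_add hx hy (hbddBelow x hx)]
  · exact (concaveOn_sInf_chainValues hKconv hv hconc hbddBelow).neg

theorem cyclic_pseudomonotone_type_I_potential
    {V : Type*} [AddCommGroup V] [Module ℝ V]
    (K : Set V) (hKconv : Convex ℝ K) (f : V → V → ℝ)
    (htypeI : ∀ (n : ℕ) (x : ℕ → V), 2 ≤ n → (∀ i, x i ∈ K) →
      (∑ i ∈ Finset.range (n - 2), f (x i) (x (i + 1))) ≤ f (x 0) (x (n - 1)) →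
      f (x (n - 1)) (x (n - 2)) ≤ 0)
    (u v : V) (hu : u ∈ K) (hv : v ∈ K) (huv : 0 < f u v)
    (hbdd : ∀ x ∈ K, ∀ s ∈ chainValues K f v x, f x u ≤ s) :
    (∀ x ∈ K, ∀ y ∈ K,
        (-(sInf (chainValues K f v y))) - (-(sInf (chainValues K f v x))) ≤ f x y) ∧
    ((∀ y ∈ K, ConcaveOn ℝ K (fun x => f x y)) →
        ConvexOn ℝ K (fun x => -(sInf (chainValues K f v x)))) :=
  cyclic_pseudomonotone_type_I_potential_general K hKconv f u v hv hbdd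
end
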